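/- BiD-A* pruning is weaker than BiDS pruning on the induced graph: let h be consistent with h(s) ≥ 0, and consider a forward-search path s=v₀,…,v_i with unmodified length δ = Σw(v_{j-1},v_j). The corresponding length under modified weights w'(u,v)=w(u,v)-h(u)+h(v) is δ' = δ + h(v_i) - h(s). Hence δ + h(v_i) ≥ μ/2 implies δ' ≥ μ/2 - h(s), and in particular if h(s) ≥ 0 then δ' ≥ μ/2 implies δ + h(v_i) ≥ μ/2. -/

import Mathlib

noncomputable def pathWeight {V : Type*} (w : V → V → ℝ) : List V → ℝ
  | [] => 0
  | [_] => 0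
  | u :: v :: rest => w u v + pathWeight w (v :: rest)

/-! Reweighting by a potential, `w' u v = w u v - h u + h v`, changes the weight of a path only
through its endpoints, because the intermediate potentials telescope. Given `δ' = δ + h vᵢ - h s`,
both pruning comparisons are linear arithmetic. -/

theorem pathWeight_reweight {V : Type*} (w : V → V → ℝ) (h : V → ℝ) :
    ∀ (l : List V) (hne : l ≠ []),
      pathWeight (fun u v => w u v - h u + h v) l
        = pathWeight w l + h (l.getLast hne) - h (l.head hne)
  | [a], _ => by simp [pathWeight]
  | a :: b :: rest, _ => by
      have ih := pathWeight_reweight w h (b :: rest) (List.cons_ne_nil b rest)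
      simp only [pathWeight, ih, List.head_cons, List.getLast_cons_cons]
      ring

theorem bidastar_prune_weaker_general {V : Type*} (w : V → V → ℝ)
    (h : V → ℝ)
    (s : V) (hs0 : 0 ≤ h s) (μ : ℝ)
    (l : List V) (hne : l ≠ []) (hhead : l.head hne = s) :
    pathWeight (fun u v => w u v - h u + h v) l
      = pathWeight w l + h (l.getLast hne) - h s ∧
    (μ / 2 ≤ pathWeight w l + h (l.getLast hne) →
      μ / 2 - h s ≤ pathWeight (fun u v => w u v - h u + h v) l) ∧
    (μ / 2 ≤ pathWeight (fun u v => w u v - h u + h v) l →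
      μ / 2 ≤ pathWeight w l + h (l.getLast hne)) := by
  have hreweight := pathWeight_reweight w h l hne
  rw [hhead] at hreweight
  exact ⟨hreweight, fun _ => by linarith, fun _ => by linarith⟩

/-- For a forward-search path from `s` to `v_i` with unmodified
length `δ`, the length under the modified weights `w' u v = w u v - h u + h v` is
`δ' = δ + h v_i - h s`. Hence `δ + h v_i ≥ μ/2` implies `δ' ≥ μ/2 - h s`, and if
`h s ≥ 0` then `δ' ≥ μ/2` implies `δ + h v_i ≥ μ/2`. -/
theorem bidastar_prune_weaker {V : Type*} (Adj : V → V → Prop) (w : V → V → ℝ)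
    (h : V → ℝ)
    (hw : ∀ u v, Adj u v → 0 ≤ w u v)
    (hcons : ∀ u v, Adj u v → h u ≤ w u v + h v)
    (s : V) (hs0 : 0 ≤ h s) (μ : ℝ)
    (l : List V) (hne : l ≠ []) (hchain : l.Chain' Adj) (hhead : l.head hne = s) :
    pathWeight (fun u v => w u v - h u + h v) l
      = pathWeight w l + h (l.getLast hne) - h s ∧
    (μ / 2 ≤ pathWeight w l + h (l.getLast hne) →
      μ / 2 - h s ≤ pathWeight (fun u v => w u v - h u + h v) l) ∧
    (μ / 2 ≤ pathWeight (fun u v => w u v - h u + h v) l →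
      μ / 2 ≤ pathWeight w l + h (l.getLast hne)) :=
  bidastar_prune_weaker_general w h s hs0 μ l hne hhead
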